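/- For all x ∈ [−1,0], erf(x) ≤ 0.8·x; and for all x ∈ [0,1], erf(x) ≥ 0.8·x. -/
import Mathlib

/-- The error function `erf x = (2/√π) ∫₀ˣ e^{-t²} dt`. -/
noncomputable def erf (x : ℝ) : ℝ :=
  (2 / Real.sqrt Real.pi) * ∫ t in (0 : ℝ)..x, Real.exp (-t ^ 2)

open intervalIntegral Real

lemma exp_lb {u : ℝ} (h0 : 0 ≤ u) (h1 : u ≤ 1) :
    1 - u + u ^ 2 / 2 - 2 * u ^ 3 / 9 ≤ Real.exp (-u) := by
  have habs : |(-u)| ≤ 1 := by rw [abs_neg, abs_of_nonneg h0]; exact h1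
  have h := Real.exp_bound habs (n := 3) (by norm_num)
  have hsum : ∑ m ∈ Finset.range 3, (-u) ^ m / (m.factorial : ℝ) = 1 - u + u ^ 2 / 2 := by
    simp [Finset.sum_range_succ, Nat.factorial]
    ring
  rw [hsum, abs_neg, abs_of_nonneg h0] at h
  rw [abs_le] at h
  have h1' := h.1
  norm_num [Nat.factorial] at h1'
  linarith

lemma key (x : ℝ) (hx : x ∈ Set.Icc (0:ℝ) 1) : 0.8 * x ≤ erf x := by
  obtain ⟨h0, h1⟩ := hx
  have hcont : Continuous fun t : ℝ => Real.exp (-t ^ 2) := by fun_prop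
  have hI : IntervalIntegrable (fun t : ℝ => Real.exp (-t ^ 2)) MeasureTheory.volume 0 x :=
    hcont.intervalIntegrable _ _
  have hIp : IntervalIntegrable (fun t : ℝ => 1 - t ^ 2 + t ^ 4 / 2 - 2 / 9 * t ^ 6)
      MeasureTheory.volume 0 x := by
    apply Continuous.intervalIntegrable; fun_prop
  have hmono : ∫ t in (0:ℝ)..x, (1 - t ^ 2 + t ^ 4 / 2 - 2 / 9 * t ^ 6)
      ≤ ∫ t in (0:ℝ)..x, Real.exp (-t ^ 2) := by
    apply intervalIntegral.integral_mono_on h0 hIp hI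
    intro t ht
    have ht0 : 0 ≤ t ^ 2 := sq_nonneg t
    have ht1 : t ^ 2 ≤ 1 := by nlinarith [ht.1, ht.2]
    have := exp_lb ht0 ht1
    calc 1 - t ^ 2 + t ^ 4 / 2 - 2 / 9 * t ^ 6
        = 1 - t ^ 2 + (t ^ 2) ^ 2 / 2 - 2 * (t ^ 2) ^ 3 / 9 := by ring
      _ ≤ Real.exp (-t ^ 2) := this
  have hval : ∫ t in (0:ℝ)..x, (1 - t ^ 2 + t ^ 4 / 2 - 2 / 9 * t ^ 6)
      = x - x ^ 3 / 3 + x ^ 5 / 10 - 2 * x ^ 7 / 63 := by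
    rw [intervalIntegral.integral_sub, intervalIntegral.integral_add,
        intervalIntegral.integral_sub]
    · rw [intervalIntegral.integral_const, intervalIntegral.integral_div,
        intervalIntegral.integral_const_mul, integral_pow, integral_pow, integral_pow]
      norm_num; ring
    all_goals apply Continuous.intervalIntegrable
    all_goals fun_prop
  have hpoly : (463/630 : ℝ) * x ≤ x - x ^ 3 / 3 + x ^ 5 / 10 - 2 * x ^ 7 / 63 := by
    nlinarith [sq_nonneg (x - 1), sq_nonneg (x ^ 2 - 1), sq_nonneg (x ^ 3 - x),
      mul_nonneg h0 h0, sq_nonneg (x ^ 2 - x), sq_nonneg (x ^ 3 - 1),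
      mul_nonneg (mul_nonneg h0 h0) h0]
  have hs : Real.sqrt Real.pi ≤ 463 / 252 := by
    rw [show (463/252 : ℝ) = Real.sqrt ((463/252)^2) by
      rw [Real.sqrt_sq]; norm_num]
    apply Real.sqrt_le_sqrt
    nlinarith [Real.pi_lt_d2]
  have hspos : 0 < Real.sqrt Real.pi := Real.sqrt_pos.mpr Real.pi_pos
  have h2s : (504/463 : ℝ) ≤ 2 / Real.sqrt Real.pi := by
    rw [div_le_div_iff₀ (by norm_num) hspos]
    linarith
  unfold erf
  calc 0.8 * x = (504/463 : ℝ) * ((463/630) * x) := by ring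
    _ ≤ (2 / Real.sqrt Real.pi) * ((463/630) * x) := by
        apply mul_le_mul_of_nonneg_right h2s; positivity
    _ ≤ (2 / Real.sqrt Real.pi) * ∫ t in (0:ℝ)..x, Real.exp (-t ^ 2) := by
        apply mul_le_mul_of_nonneg_left _ (by positivity)
        linarith

lemma erf_neg (x : ℝ) : erf (-x) = - erf x := by
  unfold erf
  have : ∫ t in (0:ℝ)..(-x), Real.exp (-t ^ 2) = - ∫ t in (0:ℝ)..x, Real.exp (-t ^ 2) := by
    calc ∫ t in (0:ℝ)..(-x), Real.exp (-t ^ 2)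
        = ∫ t in (0:ℝ)..(-x), Real.exp (-(-t) ^ 2) := by simp
      _ = ∫ t in (-(-x))..(-(0:ℝ)), Real.exp (-t ^ 2) :=
          intervalIntegral.integral_comp_neg fun t => Real.exp (-t ^ 2)
      _ = ∫ t in x..(0:ℝ), Real.exp (-t ^ 2) := by norm_num
      _ = - ∫ t in (0:ℝ)..x, Real.exp (-t ^ 2) := intervalIntegral.integral_symm 0 x
  rw [this]; ring

theorem erf_vs_line :
    (∀ x : ℝ, x ∈ Set.Icc (-1 : ℝ) 0 → erf x ≤ 0.8 * x) ∧
    (∀ x : ℝ, x ∈ Set.Icc (0 : ℝ) 1 → 0.8 * x ≤ erf x) := by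
  constructor
  · intro x hx
    have h := key (-x) ⟨by linarith [hx.2], by linarith [hx.1]⟩
    rw [erf_neg] at h
    linarith
  · exact key
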